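/- arXiv:2404.16791 — 4 statements merged into one kernel-verified Lean document; each statement's English description precedes it below -/
import Mathlib

section
/- If A is a matrix in U(R_min^max, C_min^max) all of whose entries are 0 or 1, then A is an extreme point of U(R_min^max, C_min^max); i.e., if A = (1/2)(E + F) with E, F in U(R_min^max, C_min^max), then E = F = A. -/
/-- The transportation polytope `U(R_min^max, C_min^max)`: n×m real matrices with entries
in `[0,1]`, row sums in `[r i, R i]` and column sums in `[c j, C j]`. -/
def transportU (n m : ℕ) (r R : Fin n → ℕ) (c C : Fin m → ℕ) :
    Set (Matrix (Fin n) (Fin m) ℝ) :=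
  {A | (∀ i j, 0 ≤ A i j ∧ A i j ≤ 1) ∧
       (∀ i, (r i : ℝ) ≤ ∑ j, A i j ∧ ∑ j, A i j ≤ (R i : ℝ)) ∧
       (∀ j, (c j : ℝ) ≤ ∑ i, A i j ∧ ∑ i, A i j ≤ (C j : ℝ))}

/-! Only the entry bounds matter: `0` and `1` are the endpoints of `[0,1]`, so a midpoint of two
points of `[0,1]` can equal one of them only if both points do. -/

lemma eq_and_eq_of_zero_or_one_eq_half_add {a x y : ℝ} (ha : a = 0 ∨ a = 1)
    (hx : 0 ≤ x ∧ x ≤ 1) (hy : 0 ≤ y ∧ y ≤ 1) (hmid : a = (1 / 2 : ℝ) * (x + y)) :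
    x = a ∧ y = a := by
  obtain ⟨hx0, hx1⟩ := hx
  obtain ⟨hy0, hy1⟩ := hy
  rcases ha with rfl | rfl <;> constructor <;> linarith

lemma Matrix.eq_and_eq_of_zeroOne_eq_half_smul_add {ι κ : Type*} {A E F : Matrix ι κ ℝ}
    (h01 : ∀ i j, A i j = 0 ∨ A i j = 1)
    (hE : ∀ i j, 0 ≤ E i j ∧ E i j ≤ 1) (hF : ∀ i j, 0 ≤ F i j ∧ F i j ≤ 1)
    (hmid : A = (1 / 2 : ℝ) • (E + F)) :
    E = A ∧ F = A := by
  have hentry (i j) : E i j = A i j ∧ F i j = A i j :=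
    eq_and_eq_of_zero_or_one_eq_half_add (h01 i j) (hE i j) (hF i j) (by simp [hmid, mul_add])
  exact ⟨Matrix.ext fun i j => (hentry i j).1, Matrix.ext fun i j => (hentry i j).2⟩

theorem zeroOne_extreme_transportU_general (n m : ℕ)
    (r R : Fin n → ℕ) (c C : Fin m → ℕ)
    (A : Matrix (Fin n) (Fin m) ℝ)
    (h01 : ∀ i j, A i j = 0 ∨ A i j = 1)
    (E F : Matrix (Fin n) (Fin m) ℝ)
    (hE : E ∈ transportU n m r R c C) (hF : F ∈ transportU n m r R c C)
    (hmid : A = (1 / 2 : ℝ) • (E + F)) :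
    E = A ∧ F = A :=
  Matrix.eq_and_eq_of_zeroOne_eq_half_smul_add h01 hE.1 hF.1 hmid

theorem zeroOne_extreme_transportU (n m : ℕ) (hn : 0 < n) (hm : 0 < m)
    (r R : Fin n → ℕ) (c C : Fin m → ℕ)
    (hrR : ∀ i, r i ≤ R i) (hcC : ∀ j, c j ≤ C j)
    (A : Matrix (Fin n) (Fin m) ℝ) (hA : A ∈ transportU n m r R c C)
    (h01 : ∀ i j, A i j = 0 ∨ A i j = 1)
    (E F : Matrix (Fin n) (Fin m) ℝ)
    (hE : E ∈ transportU n m r R c C) (hF : F ∈ transportU n m r R c C)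
    (hmid : A = (1 / 2 : ℝ) • (E + F)) :
    E = A ∧ F = A :=
  zeroOne_extreme_transportU_general n m r R c C A h01 E F hE hF hmid
end

section
/- If A is a matrix in U^k(R_min^max, C_min^max) all of whose entries are 0 or 1, then A is an extreme point of U^k(R_min^max, C_min^max). -/
theorem eq_of_endpoint_eq_midpoint {𝕜 : Type*} [Field 𝕜] [LinearOrder 𝕜] [IsStrictOrderedRing 𝕜]
    {a x y : 𝕜} (ha : a = 0 ∨ a = 1) (hx : 0 ≤ x ∧ x ≤ 1) (hy : 0 ≤ y ∧ y ≤ 1)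
    (hmid : a = 1 / 2 * (x + y)) : x = a ∧ y = a := by
  obtain ⟨hx0, hx1⟩ := hx
  obtain ⟨hy0, hy1⟩ := hy
  rcases ha with rfl | rfl <;> constructor <;> linarith

theorem Matrix.eq_of_zeroOne_eq_midpoint {ι κ 𝕜 : Type*}
    [Field 𝕜] [LinearOrder 𝕜] [IsStrictOrderedRing 𝕜] {A E F : Matrix ι κ 𝕜}
    (h01 : ∀ i j, A i j = 0 ∨ A i j = 1)
    (hE : ∀ i j, 0 ≤ E i j ∧ E i j ≤ 1) (hF : ∀ i j, 0 ≤ F i j ∧ F i j ≤ 1)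
    (hmid : A = (1 / 2 : 𝕜) • (E + F)) : E = A ∧ F = A := by
  have hentry i j : E i j = A i j ∧ F i j = A i j :=
    eq_of_endpoint_eq_midpoint (h01 i j) (hE i j) (hF i j) (by simp [hmid, mul_add])
  exact ⟨Matrix.ext fun i j ↦ (hentry i j).1, Matrix.ext fun i j ↦ (hentry i j).2⟩

theorem zeroOne_extreme_transportUk_general (n m k : ℕ)
    (r R : Fin n → ℕ) (c C : Fin m → ℕ)
    (A : Matrix (Fin n) (Fin m) ℝ)
    (h01 : ∀ i j, A i j = 0 ∨ A i j = 1)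
    (E F : Matrix (Fin n) (Fin m) ℝ)
    (hE : E ∈ {B ∈ transportU n m r R c C | ∑ i, ∑ j, B i j = (k : ℝ)})
    (hF : F ∈ {B ∈ transportU n m r R c C | ∑ i, ∑ j, B i j = (k : ℝ)})
    (hmid : A = (1 / 2 : ℝ) • (E + F)) :
    E = A ∧ F = A := by
  obtain ⟨⟨hE01, -, -⟩, -⟩ := hE
  obtain ⟨⟨hF01, -, -⟩, -⟩ := hF
  exact Matrix.eq_of_zeroOne_eq_midpoint h01 hE01 hF01 hmid

theorem zeroOne_extreme_transportUk (n m k : ℕ) (hn : 0 < n) (hm : 0 < m) (hk : 0 < k)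
    (r R : Fin n → ℕ) (c C : Fin m → ℕ)
    (hrR : ∀ i, r i ≤ R i) (hcC : ∀ j, c j ≤ C j)
    (A : Matrix (Fin n) (Fin m) ℝ)
    (hA : A ∈ {B ∈ transportU n m r R c C | ∑ i, ∑ j, B i j = (k : ℝ)})
    (h01 : ∀ i j, A i j = 0 ∨ A i j = 1)
    (E F : Matrix (Fin n) (Fin m) ℝ)
    (hE : E ∈ {B ∈ transportU n m r R c C | ∑ i, ∑ j, B i j = (k : ℝ)})
    (hF : F ∈ {B ∈ transportU n m r R c C | ∑ i, ∑ j, B i j = (k : ℝ)})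
    (hmid : A = (1 / 2 : ℝ) • (E + F)) :
    E = A ∧ F = A :=
  zeroOne_extreme_transportUk_general n m k r R c C A h01 E F hE hF hmid
end

section
/- Every extreme point of U(R_min^max, C_min^max) is a 0-1 matrix, i.e., belongs to P(R_min^max, C_min^max). -/
open Finset Filter Topology

theorem eq_zero_of_mem_extremePoints_of_eventually_add_smul_mem {E : Type*} [AddCommGroup E]
    [Module ℝ E] {S : Set E} {x d : E} (hx : x ∈ S.extremePoints ℝ)
    (h : ∀ᶠ t in 𝓝 (0 : ℝ), x + t • d ∈ S) : d = 0 := by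
  have hneg : ∀ᶠ t in 𝓝 (0 : ℝ), x + (-t) • d ∈ S :=
    (continuous_neg.tendsto' 0 0 neg_zero).eventually h
  obtain ⟨ε, ⟨hadd, hsub⟩, hε⟩ :=
    (((h.and hneg).filter_mono nhdsWithin_le_nhds).and
      (self_mem_nhdsWithin (s := Set.Ioi (0 : ℝ)))).exists
  rw [neg_smul, ← sub_eq_add_neg] at hsub
  have := hx.2 hsub hadd (mem_openSegment_sub_add x (ε • d))
  exact (smul_eq_zero.mp (sub_eq_self.mp this)).resolve_left hε.ne'

theorem eventually_mem_Icc_add_mul {lo a hi d : ℝ} (ha : a ∈ Set.Icc lo hi)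
    (hd : d ≠ 0 → a ∈ Set.Ioo lo hi) : ∀ᶠ t in 𝓝 (0 : ℝ), a + t * d ∈ Set.Icc lo hi := by
  rcases eq_or_ne d 0 with rfl | hd0
  · simpa using ha
  have hcont : Tendsto (fun t : ℝ => a + t * d) (𝓝 0) (𝓝 a) := by
    have : Continuous fun t : ℝ => a + t * d := by fun_prop
    simpa using this.tendsto 0
  exact (hcont.eventually (Ioo_mem_nhds (hd hd0).1 (hd hd0).2)).mono
    fun _ => Set.mem_Icc_of_Ioo

theorem eventually_mem_Icc_natCast_add_mul {lo hi : ℕ} {a d : ℝ} (ha : a ∈ Set.Icc (lo : ℝ) hi)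
    (hd : ∀ z : ℤ, a = z → d = 0) : ∀ᶠ t in 𝓝 (0 : ℝ), a + t * d ∈ Set.Icc (lo : ℝ) hi :=
  eventually_mem_Icc_add_mul ha fun hd0 =>
    ⟨ha.1.lt_of_ne fun h => hd0 (hd lo (mod_cast h.symm)),
      ha.2.lt_of_ne fun h => hd0 (hd hi (mod_cast h))⟩

theorem exists_ne_mem_Ioo_of_sum_eq_intCast {ι : Type*} [Fintype ι] [DecidableEq ι]
    {f : ι → ℝ} (hf : ∀ j, f j ∈ Set.Icc 0 1) {z : ℤ} (hz : ∑ j, f j = z)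
    {j₀ : ι} (hj₀ : f j₀ ∈ Set.Ioo 0 1) : ∃ j ≠ j₀, f j ∈ Set.Ioo 0 1 := by
  by_contra! honly
  have hrest : ∑ j ∈ univ.erase j₀, f j ∈ (Int.castAddHom ℝ).range := by
    refine AddSubgroup.sum_mem _ fun j hj => ?_
    rcases (hf j).1.eq_or_lt with h0 | h0
    · exact ⟨0, by simp [← h0]⟩
    rcases (hf j).2.eq_or_lt with h1 | h1
    · exact ⟨1, by simp [h1]⟩
    exact absurd ⟨h0, h1⟩ (honly j (ne_of_mem_erase hj))
  obtain ⟨k, hk⟩ := hrest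
  have hfj₀ : f j₀ = ((z - k : ℤ) : ℝ) := by
    rw [← add_sum_erase _ _ (mem_univ j₀)] at hz
    simp only [Int.coe_castAddHom] at hk
    push_cast
    linarith
  rw [hfj₀] at hj₀
  obtain ⟨h0, h1⟩ := hj₀
  norm_cast at h0 h1
  omega

theorem two_mul_card_le_card_filter_mem {α β : Type*} [DecidableEq β] (f : α → β)
    {F : Finset α} {I : Finset β} (hI : ∀ i ∈ I, 2 ≤ #{p ∈ F | f p = i}) :
    2 * #I ≤ #{p ∈ F | f p ∈ I} := by
  rw [card_eq_sum_card_fiberwise (s := {p ∈ F | f p ∈ I}) (t := I)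
    fun p hp => (mem_filter.mp hp).2, mul_comm, ← smul_eq_mul, ← sum_const]
  refine sum_le_sum fun i hi => (hI i hi).trans_eq ?_
  rw [filter_filter]
  exact congrArg card (filter_congr fun p _ => ⟨fun h => ⟨h ▸ hi, h⟩, And.right⟩)

namespace Matrix

theorem exists_ne_zero_lineSums_eq_zero_of_card_add_card_lt {K ι κ : Type*} [Field K]
    [Fintype ι] [Fintype κ] [DecidableEq ι] [DecidableEq κ]
    {F : Finset (ι × κ)} {I : Finset ι} {J : Finset κ} (h : #I + #J < #F) :
    ∃ D : Matrix ι κ K, D ≠ 0 ∧ (∀ p ∉ F, D p.1 p.2 = 0) ∧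
      (∀ i ∈ I, ∑ j, D i j = 0) ∧ (∀ j ∈ J, ∑ i, D i j = 0) := by
  let Φ : Matrix ι κ K →ₗ[K] (↥Fᶜ → K) × (↥I → K) × (↥J → K) :=
    { toFun D := (fun p => D p.1.1 p.1.2, fun i => ∑ j, D i j, fun j => ∑ i, D i j)
      map_add' D E := by ext <;> simp [sum_add_distrib]
      map_smul' c D := by ext <;> simp [mul_sum] }
  have hdim : Module.finrank K ((↥Fᶜ → K) × (↥I → K) × (↥J → K)) <
      Module.finrank K (Matrix ι κ K) := by
    rw [Module.finrank_matrix, Module.finrank_self, mul_one, ← Fintype.card_prod,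
      ← card_compl_add_card F]
    simp only [Module.finrank_prod, Module.finrank_fintype_fun_eq_card, Fintype.card_coe]
    omega
  obtain ⟨D, hD, hD0⟩ :=
    (Submodule.ne_bot_iff _).mp (LinearMap.ker_ne_bot_of_finrank_lt (f := Φ) hdim)
  simp only [LinearMap.mem_ker, Φ, LinearMap.coe_mk, AddHom.coe_mk, Prod.mk_eq_zero,
    funext_iff, Pi.zero_apply, Subtype.forall, mem_compl] at hD
  exact ⟨D, hD0, hD.1, hD.2⟩

theorem sum_rowSums_eq_sum_colSums_of_support_subset {M ι κ : Type*}
    [AddCommMonoid M] [Fintype ι] [Fintype κ] {D : Matrix ι κ M} {I : Finset ι} {J : Finset κ}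
    (hD : ∀ i j, D i j ≠ 0 → i ∈ I ∧ j ∈ J) :
    ∑ i ∈ I, ∑ j, D i j = ∑ j ∈ J, ∑ i, D i j := by
  have hrow : ∀ i ∉ I, ∑ j, D i j = 0 := fun i hi =>
    sum_eq_zero fun j _ => by_contra fun h => hi (hD i j h).1
  have hcol : ∀ j ∉ J, ∑ i, D i j = 0 := fun j hj =>
    sum_eq_zero fun i _ => by_contra fun h => hj (hD i j h).2
  rw [sum_subset (subset_univ I) fun i _ => hrow i, sum_subset (subset_univ J) fun j _ => hcol j,
    sum_comm]

theorem exists_ne_zero_lineSums_eq_zero {K ι κ : Type*} [Field K]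
    [Fintype ι] [Fintype κ] [DecidableEq ι] [DecidableEq κ]
    {F : Finset (ι × κ)} {I : Finset ι} {J : Finset κ} (hF : F.Nonempty)
    (hI : 2 * #I ≤ #{p ∈ F | p.1 ∈ I}) (hJ : 2 * #J ≤ #{p ∈ F | p.2 ∈ J}) :
    ∃ D : Matrix ι κ K, D ≠ 0 ∧ (∀ p ∉ F, D p.1 p.2 = 0) ∧
      (∀ i ∈ I, ∑ j, D i j = 0) ∧ (∀ j ∈ J, ∑ i, D i j = 0) := by
  have hIF := card_filter_le F (·.1 ∈ I)
  have hJF := card_filter_le F (·.2 ∈ J)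
  by_cases hprod : ∀ p ∈ F, p.1 ∈ I ∧ p.2 ∈ J
  · -- The row constraint at `i₀` is implied by the others, so it can be dropped.
    obtain ⟨⟨i₀, _⟩, hp₀⟩ := hF
    have hi₀ : i₀ ∈ I := (hprod _ hp₀).1
    have hcard := card_erase_add_one hi₀
    obtain ⟨D, hD0, hDF, hDI, hDJ⟩ :=
      exists_ne_zero_lineSums_eq_zero_of_card_add_card_lt (K := K) (F := F) (I := I.erase i₀)
        (J := J) (by omega)
    have hsupp : ∀ i j, D i j ≠ 0 → i ∈ I ∧ j ∈ J := fun i j h =>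
      hprod (i, j) (by_contra fun hij => h (hDF _ hij))
    have hrow₀ : ∑ j, D i₀ j = 0 := by
      have htotal := sum_rowSums_eq_sum_colSums_of_support_subset hsupp
      rwa [sum_eq_zero hDJ, ← add_sum_erase _ _ hi₀, sum_eq_zero hDI, add_zero] at htotal
    refine ⟨D, hD0, hDF, fun i hi => ?_, hDJ⟩
    rcases eq_or_ne i i₀ with rfl | hne
    · exact hrow₀
    · exact hDI i (mem_erase.mpr ⟨hne, hi⟩)
  · push Not at hprod
    obtain ⟨p, hpF, hp⟩ := hprod
    have hlt : #{p ∈ F | p.1 ∈ I} < #F ∨ #{p ∈ F | p.2 ∈ J} < #F := by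
      by_cases h1 : p.1 ∈ I
      · exact .inr (card_lt_card (filter_ssubset.mpr ⟨p, hpF, hp h1⟩))
      · exact .inl (card_lt_card (filter_ssubset.mpr ⟨p, hpF, h1⟩))
    exact exists_ne_zero_lineSums_eq_zero_of_card_add_card_lt (by omega)

variable {ι κ : Type*} [Fintype ι] [Fintype κ]

def IsFreeDirection (A D : Matrix ι κ ℝ) : Prop :=
  (∀ i j, D i j ≠ 0 → A i j ∈ Set.Ioo 0 1) ∧
    (∀ i (z : ℤ), ∑ j, A i j = z → ∑ j, D i j = 0) ∧
    (∀ j (z : ℤ), ∑ i, A i j = z → ∑ i, D i j = 0)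

theorem exists_isFreeDirection_ne_zero {A : Matrix ι κ ℝ}
    (hA : ∀ i j, A i j ∈ Set.Icc 0 1) {i₀ : ι} {j₀ : κ} (h₀ : A i₀ j₀ ∈ Set.Ioo 0 1) :
    ∃ D, D ≠ 0 ∧ IsFreeDirection A D := by
  classical
  let F : Finset (ι × κ) := {p | A p.1 p.2 ∈ Set.Ioo 0 1}
  let I : Finset ι := {i | (∃ z : ℤ, ∑ j, A i j = z) ∧ ∃ j, A i j ∈ Set.Ioo 0 1}
  let J : Finset κ := {j | (∃ z : ℤ, ∑ i, A i j = z) ∧ ∃ i, A i j ∈ Set.Ioo 0 1}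
  have hI : ∀ i ∈ I, 2 ≤ #{p ∈ F | p.1 = i} := by
    simp only [I, mem_filter, mem_univ, true_and]
    rintro i ⟨⟨z, hz⟩, j₁, hj₁⟩
    obtain ⟨j₂, hne, hj₂⟩ := exists_ne_mem_Ioo_of_sum_eq_intCast (hA i) hz hj₁
    exact one_lt_card.mpr ⟨(i, j₁), by simpa [F] using hj₁, (i, j₂), by simpa [F] using hj₂,
      by simpa using hne.symm⟩
  have hJ : ∀ j ∈ J, 2 ≤ #{p ∈ F | p.2 = j} := by
    simp only [J, mem_filter, mem_univ, true_and]
    rintro j ⟨⟨z, hz⟩, i₁, hi₁⟩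
    obtain ⟨i₂, hne, hi₂⟩ := exists_ne_mem_Ioo_of_sum_eq_intCast (hA · j) hz hi₁
    exact one_lt_card.mpr ⟨(i₁, j), by simpa [F] using hi₁, (i₂, j), by simpa [F] using hi₂,
      by simpa using hne.symm⟩
  obtain ⟨D, hD0, hDF, hDI, hDJ⟩ := exists_ne_zero_lineSums_eq_zero (K := ℝ)
    ⟨(i₀, j₀), by simpa [F] using h₀⟩ (two_mul_card_le_card_filter_mem Prod.fst hI)
    (two_mul_card_le_card_filter_mem Prod.snd hJ)
  have hsupp : ∀ i j, D i j ≠ 0 → A i j ∈ Set.Ioo 0 1 := fun i j h =>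
    by_contra fun h' => h (hDF (i, j) (by simpa [F] using h'))
  refine ⟨D, hD0, hsupp, fun i z hz => ?_, fun j z hz => ?_⟩
  · by_cases hi : i ∈ I
    · exact hDI i hi
    · exact sum_eq_zero fun j _ => by_contra fun h =>
        hi (mem_filter.mpr ⟨mem_univ _, ⟨z, hz⟩, j, hsupp i j h⟩)
  · by_cases hj : j ∈ J
    · exact hDJ j hj
    · exact sum_eq_zero fun i _ => by_contra fun h =>
        hj (mem_filter.mpr ⟨mem_univ _, ⟨z, hz⟩, i, hsupp i j h⟩)

end Matrix

theorem eventually_add_smul_mem_transportU {n m : ℕ} {r R : Fin n → ℕ} {c C : Fin m → ℕ}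
    {A D : Matrix (Fin n) (Fin m) ℝ} (hA : A ∈ transportU n m r R c C)
    (hD : A.IsFreeDirection D) : ∀ᶠ t in 𝓝 (0 : ℝ), A + t • D ∈ transportU n m r R c C := by
  obtain ⟨hentry, hrow, hcol⟩ := hA
  obtain ⟨hDentry, hDrow, hDcol⟩ := hD
  have hentry' : ∀ i j, ∀ᶠ t in 𝓝 (0 : ℝ), A i j + t * D i j ∈ Set.Icc 0 1 := fun i j =>
    eventually_mem_Icc_add_mul (hentry i j) (hDentry i j)
  have hrow' : ∀ i, ∀ᶠ t in 𝓝 (0 : ℝ), ∑ j, A i j + t * ∑ j, D i j ∈ Set.Icc (r i : ℝ) (R i) :=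
    fun i => eventually_mem_Icc_natCast_add_mul (hrow i) (hDrow i)
  have hcol' : ∀ j, ∀ᶠ t in 𝓝 (0 : ℝ), ∑ i, A i j + t * ∑ i, D i j ∈ Set.Icc (c j : ℝ) (C j) :=
    fun j => eventually_mem_Icc_natCast_add_mul (hcol j) (hDcol j)
  filter_upwards [eventually_all.2 fun i => eventually_all.2 (hentry' i),
    eventually_all.2 hrow', eventually_all.2 hcol'] with t ht hrt hct
  refine ⟨fun i j => ?_, fun i => ?_, fun j => ?_⟩
  · simpa using ht i j
  · simpa [sum_add_distrib, mul_sum] using hrt i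
  · simpa [sum_add_distrib, mul_sum] using hct j

theorem extremePoint_transportU_zeroOne_general (n m : ℕ)
    (r R : Fin n → ℕ) (c C : Fin m → ℕ)
    (A : Matrix (Fin n) (Fin m) ℝ)
    (hA : A ∈ Set.extremePoints ℝ (transportU n m r R c C)) :
    ∀ i j, A i j = 0 ∨ A i j = 1 := by
  intro i j
  by_contra hnot01
  have hA01 := hA.1.1
  have hfrac : A i j ∈ Set.Ioo 0 1 :=
    ⟨(hA01 i j).1.lt_of_ne fun h => hnot01 (.inl h.symm),
      (hA01 i j).2.lt_of_ne fun h => hnot01 (.inr h)⟩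
  obtain ⟨D, hD0, hD⟩ := Matrix.exists_isFreeDirection_ne_zero hA01 hfrac
  exact hD0 (eq_zero_of_mem_extremePoints_of_eventually_add_smul_mem hA
    (eventually_add_smul_mem_transportU hA.1 hD))

theorem extremePoint_transportU_zeroOne (n m : ℕ) (hn : 0 < n) (hm : 0 < m)
    (r R : Fin n → ℕ) (c C : Fin m → ℕ)
    (hrR : ∀ i, r i ≤ R i) (hcC : ∀ j, c j ≤ C j)
    (A : Matrix (Fin n) (Fin m) ℝ)
    (hA : A ∈ Set.extremePoints ℝ (transportU n m r R c C)) :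
    ∀ i j, A i j = 0 ∨ A i j = 1 :=
  extremePoint_transportU_zeroOne_general n m r R c C A hA
end

section
/- Every extreme point of the set of n×n doubly stochastic matrices is a permutation matrix. -/
open Matrix

theorem Matrix.doublyStochastic_eq_setOf {R ι : Type*} [Semiring R] [PartialOrder R]
    [IsOrderedRing R] [Fintype ι] [DecidableEq ι] :
    (doublyStochastic R ι : Set (Matrix ι ι R)) =
      {B | (∀ i j, 0 ≤ B i j) ∧ (∀ i, ∑ j, B i j = 1) ∧ (∀ j, ∑ i, B i j = 1)} := by
  ext B
  simp [mem_doublyStochastic_iff_sum]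

theorem Equiv.Perm.permMatrix_apply {R ι : Type*} [Zero R] [One R] [DecidableEq ι]
    (σ : Equiv.Perm ι) (i j : ι) :
    σ.permMatrix R i j = if σ i = j then 1 else 0 := by
  simp [eq_comm]

theorem extremePoint_doublyStochastic_isPermMatrix (n : ℕ)
    (A : Matrix (Fin n) (Fin n) ℝ)
    (hA : A ∈ Set.extremePoints ℝ
      {B : Matrix (Fin n) (Fin n) ℝ |
        (∀ i j, 0 ≤ B i j) ∧ (∀ i, ∑ j, B i j = 1) ∧ (∀ j, ∑ i, B i j = 1)}) :
    ∃ σ : Equiv.Perm (Fin n), ∀ i j, A i j = if σ i = j then 1 else 0 := by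
  rw [← doublyStochastic_eq_setOf, extremePoints_doublyStochastic] at hA
  obtain ⟨σ, rfl⟩ := hA
  exact ⟨σ, σ.permMatrix_apply⟩
end
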